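/- arXiv:2512.16224 — 5 statements merged into one kernel-verified Lean document; each statement's English description precedes it below -/
import Mathlib

section
/- Let ξ(τ) = P(ζ₁ P_J + ζ₂ > τ) + P(ζ₁ P_J + ζ₃ ≤ τ) where P_J is uniform on [0, P̂], ζ₁, P̂ > 0 and 0 ≤ ζ₂ < ζ₃. If ζ₁P̂ > ζ₃ − ζ₂, then the minimum of ξ over all τ > 0 equals 1 − (ζ₃ − ζ₂)/(ζ₁·P̂), and this minimum is attained for every τ in the interval [ζ₃, ζ₁P̂ + ζ₂]. -/
open MeasureTheory Set

/-- The uniform probability measure on `[0, P]`. -/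
noncomputable def unifMeasure (P : ℝ) : Measure ℝ :=
  (ENNReal.ofReal P)⁻¹ • (volume.restrict (Icc 0 P))

/-- Detection error probability (false alarm + miss detection) at threshold `τ`. -/
noncomputable def DEP (Phat ζ₁ ζ₂ ζ₃ τ : ℝ) : ℝ :=
  ((unifMeasure Phat) {x | ζ₁ * x + ζ₂ > τ}).toReal +
    ((unifMeasure Phat) {x | ζ₁ * x + ζ₃ ≤ τ}).toReal

lemma meas_gt (P a b τ : ℝ) (hP : 0 < P) (ha : 0 < a) :
    ((unifMeasure P) {x | a * x + b > τ}).toReal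
      = (P - min P (max 0 ((τ - b) / a))) / P := by
  set s := (τ - b) / a with hs
  have hset : {x : ℝ | a * x + b > τ} = Ioi s := by
    ext x; simp only [mem_setOf_eq, mem_Ioi, hs, div_lt_iff₀ ha]
    constructor <;> intro h <;> linarith
  rw [hset]
  have heq : (unifMeasure P) (Ioi s)
      = (ENNReal.ofReal P)⁻¹ * volume (Ioi s ∩ Icc 0 P) := by
    simp [unifMeasure, Measure.restrict_apply measurableSet_Ioi]
  rw [heq]
  have hvol : volume (Ioi s ∩ Icc 0 P) = ENNReal.ofReal (P - min P (max 0 s)) := by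
    rcases lt_or_ge s 0 with h | h
    · have hseteq : Ioi s ∩ Icc 0 P = Icc 0 P := by
        ext x; simp only [mem_inter_iff, mem_Ioi, mem_Icc]
        constructor
        · rintro ⟨_, h2⟩; exact h2
        · rintro ⟨h1, h2⟩; exact ⟨by linarith, h1, h2⟩
      rw [hseteq, Real.volume_Icc]
      congr 1
      simp only [min_def, max_def]
      split_ifs <;> linarith
    · have hseteq : Ioi s ∩ Icc 0 P = Ioc s P := by
        ext x; simp only [mem_inter_iff, mem_Ioi, mem_Icc, mem_Ioc]
        constructor
        · rintro ⟨h1, _, h3⟩; exact ⟨h1, h3⟩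
        · rintro ⟨h1, h2⟩; exact ⟨h1, by linarith, h2⟩
      rw [hseteq, Real.volume_Ioc]
      rcases le_total s P with h2 | h2
      · congr 1
        simp only [min_def, max_def]
        split_ifs <;> linarith
      · rw [ENNReal.ofReal_eq_zero.mpr (by linarith),
          Eq.comm, ENNReal.ofReal_eq_zero]
        simp only [min_def, max_def]
        split_ifs <;> linarith
  have hnn : (0:ℝ) ≤ P - min P (max 0 s) := by
    simp only [min_def, max_def]; split_ifs <;> linarith
  rw [hvol, ENNReal.toReal_mul, ENNReal.toReal_inv, ENNReal.toReal_ofReal hP.le,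
    ENNReal.toReal_ofReal hnn, inv_mul_eq_div]

lemma meas_le (P a c τ : ℝ) (hP : 0 < P) (ha : 0 < a) :
    ((unifMeasure P) {x | a * x + c ≤ τ}).toReal
      = min P (max 0 ((τ - c) / a)) / P := by
  set s := (τ - c) / a with hs
  have hset : {x : ℝ | a * x + c ≤ τ} = Iic s := by
    ext x; simp only [mem_setOf_eq, mem_Iic, hs, le_div_iff₀ ha]
    constructor <;> intro h <;> linarith
  rw [hset]
  have heq : (unifMeasure P) (Iic s)
      = (ENNReal.ofReal P)⁻¹ * volume (Iic s ∩ Icc 0 P) := by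
    simp [unifMeasure, Measure.restrict_apply measurableSet_Iic]
  rw [heq]
  have hvol : volume (Iic s ∩ Icc 0 P) = ENNReal.ofReal (min P (max 0 s)) := by
    rcases lt_or_ge s 0 with h | h
    · have hseteq : Iic s ∩ Icc 0 P = ∅ := by
        ext x; simp only [mem_inter_iff, mem_Iic, mem_Icc, mem_empty_iff_false, iff_false]
        rintro ⟨h1, h2, _⟩; linarith
      rw [hseteq, measure_empty, Eq.comm, ENNReal.ofReal_eq_zero]
      simp only [min_def, max_def]
      split_ifs <;> linarith
    · have hseteq : Iic s ∩ Icc 0 P = Icc 0 (min s P) := by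
        ext x; simp only [mem_inter_iff, mem_Iic, mem_Icc, le_min_iff]
        constructor
        · rintro ⟨h1, h2, h3⟩; exact ⟨h2, h1, h3⟩
        · rintro ⟨h1, h2, h3⟩; exact ⟨h2, h1, h3⟩
      rw [hseteq, Real.volume_Icc]
      congr 1
      simp only [min_def, max_def]
      split_ifs <;> linarith
  have hnn : (0:ℝ) ≤ min P (max 0 s) := by
    simp only [min_def, max_def]; split_ifs <;> linarith
  rw [hvol, ENNReal.toReal_mul, ENNReal.toReal_inv, ENNReal.toReal_ofReal hP.le,
    ENNReal.toReal_ofReal hnn, inv_mul_eq_div]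

lemma DEP_eq (Phat ζ₁ ζ₂ ζ₃ τ : ℝ) (hP : 0 < Phat) (hζ₁ : 0 < ζ₁) :
    DEP Phat ζ₁ ζ₂ ζ₃ τ
      = 1 - (min Phat (max 0 ((τ - ζ₂) / ζ₁)) - min Phat (max 0 ((τ - ζ₃) / ζ₁))) / Phat := by
  rw [DEP, meas_gt _ _ _ _ hP hζ₁, meas_le _ _ _ _ hP hζ₁]
  field_simp
  ring

theorem stmt_3 (Phat ζ₁ ζ₂ ζ₃ : ℝ) (hP : 0 < Phat) (hζ₁ : 0 < ζ₁) (hζ₂ : 0 ≤ ζ₂)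
    (hζ₂₃ : ζ₂ < ζ₃) (hcase : ζ₁ * Phat > ζ₃ - ζ₂) :
    (∀ τ > 0, DEP Phat ζ₁ ζ₂ ζ₃ τ ≥ 1 - (ζ₃ - ζ₂) / (ζ₁ * Phat)) ∧
      (∀ τ ∈ Icc ζ₃ (ζ₁ * Phat + ζ₂),
        DEP Phat ζ₁ ζ₂ ζ₃ τ = 1 - (ζ₃ - ζ₂) / (ζ₁ * Phat)) := by
  constructor
  · intro τ _
    rw [DEP_eq _ _ _ _ _ hP hζ₁]
    have hd : (τ - ζ₂) / ζ₁ - (τ - ζ₃) / ζ₁ = (ζ₃ - ζ₂) / ζ₁ := by ring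
    have hdpos : (0:ℝ) ≤ (ζ₃ - ζ₂) / ζ₁ := div_nonneg (by linarith) hζ₁.le
    have key : min Phat (max 0 ((τ - ζ₂) / ζ₁)) - min Phat (max 0 ((τ - ζ₃) / ζ₁))
        ≤ (ζ₃ - ζ₂) / ζ₁ := by
      simp only [min_def, max_def]
      split_ifs <;> linarith
    have h1 : (min Phat (max 0 ((τ - ζ₂) / ζ₁)) - min Phat (max 0 ((τ - ζ₃) / ζ₁))) / Phat
        ≤ ((ζ₃ - ζ₂) / ζ₁) / Phat := by gcongr
    rw [div_div] at h1
    linarith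
  · intro τ hτ
    rw [DEP_eq _ _ _ _ _ hP hζ₁]
    have ha : 0 ≤ (τ - ζ₃) / ζ₁ := by
      apply div_nonneg _ hζ₁.le; linarith [hτ.1]
    have hb : (τ - ζ₂) / ζ₁ ≤ Phat := by
      rw [div_le_iff₀ hζ₁]; linarith [hτ.2, mul_comm Phat ζ₁]
    have hab : (τ - ζ₃) / ζ₁ ≤ (τ - ζ₂) / ζ₁ := by
      gcongr <;> linarith
    have e1 : min Phat (max 0 ((τ - ζ₂) / ζ₁)) = (τ - ζ₂) / ζ₁ := by
      rw [max_eq_right (le_trans ha hab)]; exact min_eq_right hb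
    have e2 : min Phat (max 0 ((τ - ζ₃) / ζ₁)) = (τ - ζ₃) / ζ₁ := by
      rw [max_eq_right ha]; exact min_eq_right (le_trans hab hb)
    rw [e1, e2]
    have hd : (τ - ζ₂) / ζ₁ - (τ - ζ₃) / ζ₁ = (ζ₃ - ζ₂) / ζ₁ := by ring
    rw [hd, div_div]
end

section
/- For every τ > 0, the detection error probability ξ(τ) = P(ζ₁ P_J + ζ₂ > τ) + P(ζ₁ P_J + ζ₃ ≤ τ) with P_J uniform on [0, P̂] satisfies ξ(τ) ≥ max(0, 1 − (ζ₃ − ζ₂)/(ζ₁P̂)), where ζ₁, P̂ > 0 and 0 ≤ ζ₂ < ζ₃. -/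
open MeasureTheory Set

lemma key_ineq (a b P : ℝ) (hP : 0 < P) (hab : b ≤ a) :
    P - (a - b) ≤ max (P - max a 0) 0 + max (min b P) 0 := by
  rcases le_total a 0 with h1 | h1 <;> rcases le_total b P with h2 | h2 <;>
    simp [max_def, min_def, h1, h2] <;> split_ifs <;> linarith

lemma vol_Ioi_inter (a P : ℝ) :
    volume (Ioi a ∩ Icc 0 P) = ENNReal.ofReal (P - max a 0) := by
  apply le_antisymm
  · calc volume (Ioi a ∩ Icc 0 P) ≤ volume (Icc (max a 0) P) := by
          apply measure_mono
          rintro x ⟨hx1, hx2, hx3⟩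
          exact ⟨max_le hx1.le hx2, hx3⟩
        _ = ENNReal.ofReal (P - max a 0) := Real.volume_Icc
  · calc ENNReal.ofReal (P - max a 0) = volume (Ioc (max a 0) P) := Real.volume_Ioc.symm
        _ ≤ volume (Ioi a ∩ Icc 0 P) := by
          apply measure_mono
          rintro x ⟨hx1, hx2⟩
          exact ⟨lt_of_le_of_lt (le_max_left a 0) hx1,
            le_of_lt (lt_of_le_of_lt (le_max_right a 0) hx1), hx2⟩

lemma vol_Iic_inter (b P : ℝ) :
    volume (Iic b ∩ Icc 0 P) = ENNReal.ofReal (min b P) := by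
  have : Iic b ∩ Icc 0 P = Icc 0 (min b P) := by
    ext x
    simp only [mem_inter_iff, mem_Iic, mem_Icc, le_min_iff]
    tauto
  rw [this, Real.volume_Icc, sub_zero]

theorem stmt_4 (Phat ζ₁ ζ₂ ζ₃ : ℝ) (hP : 0 < Phat) (hζ₁ : 0 < ζ₁) (hζ₂ : 0 ≤ ζ₂)
    (hζ₂₃ : ζ₂ < ζ₃) :
    ∀ τ > 0, DEP Phat ζ₁ ζ₂ ζ₃ τ ≥ max 0 (1 - (ζ₃ - ζ₂) / (ζ₁ * Phat)) := by
  intro τ hτ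
  set a := (τ - ζ₂) / ζ₁ with ha
  set b := (τ - ζ₃) / ζ₁ with hb
  have hset1 : {x : ℝ | ζ₁ * x + ζ₂ > τ} = Ioi a := by
    ext x
    simp only [mem_setOf_eq, mem_Ioi, gt_iff_lt, ha, div_lt_iff₀ hζ₁]
    constructor <;> intro h <;> nlinarith
  have hset2 : {x : ℝ | ζ₁ * x + ζ₃ ≤ τ} = Iic b := by
    ext x
    simp only [mem_setOf_eq, mem_Iic, hb, le_div_iff₀ hζ₁]
    constructor <;> intro h <;> nlinarith
  have h1 : ((unifMeasure Phat) {x | ζ₁ * x + ζ₂ > τ}).toReal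
      = max (Phat - max a 0) 0 / Phat := by
    rw [hset1]
    unfold unifMeasure
    rw [Measure.smul_apply, Measure.restrict_apply measurableSet_Ioi, vol_Ioi_inter,
      smul_eq_mul, ENNReal.toReal_mul, ENNReal.toReal_inv, ENNReal.toReal_ofReal',
      ENNReal.toReal_ofReal', max_eq_left hP.le]
    rw [div_eq_inv_mul]
  have h2 : ((unifMeasure Phat) {x | ζ₁ * x + ζ₃ ≤ τ}).toReal
      = max (min b Phat) 0 / Phat := by
    rw [hset2]
    unfold unifMeasure
    rw [Measure.smul_apply, Measure.restrict_apply measurableSet_Iic, vol_Iic_inter,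
      smul_eq_mul, ENNReal.toReal_mul, ENNReal.toReal_inv, ENNReal.toReal_ofReal',
      ENNReal.toReal_ofReal', max_eq_left hP.le]
    rw [div_eq_inv_mul]
  have hab : b ≤ a := by
    rw [ha, hb, div_le_div_iff₀ hζ₁ hζ₁]
    nlinarith
  have hk := key_ineq a b Phat hP hab
  have heq : (ζ₃ - ζ₂) / (ζ₁ * Phat) = (a - b) / Phat := by
    rw [ha, hb]
    field_simp
    ring
  rw [ge_iff_le, DEP, h1, h2]
  apply max_le
  · positivity
  · calc 1 - (ζ₃ - ζ₂) / (ζ₁ * Phat) = (Phat - (a - b)) / Phat := by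
          rw [heq]; field_simp
      _ ≤ (max (Phat - max a 0) 0 + max (min b Phat) 0) / Phat :=
          (div_le_div_iff_of_pos_right hP).mpr hk
      _ = max (Phat - max a 0) 0 / Phat + max (min b Phat) 0 / Phat := add_div _ _ _
end

section
/- Let X and Y be independent random variables, each exponentially distributed with mean N > 0, and let η₁, η₂ > 0. Then E[(1 − η₂X/(η₁Y)) · 1{η₂X ≤ η₁Y}] = 1 − (η₂/η₁)·log((η₂ + η₁)/η₂). -/
open MeasureTheory Set ProbabilityTheory

namespace Stmt5Aux
open Real
open scoped ENNReal NNReal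

lemma exp_integral_Ioi {b : ℝ} (hb : 0 < b) :
    ∫ x in Ioi (0:ℝ), exp (-(b * x)) = 1 / b := by
  have h := MeasureTheory.integral_comp_mul_left_Ioi (fun x => exp (-x)) 0 hb
  simp only [mul_zero, integral_exp_neg_Ioi, neg_zero, exp_zero, smul_eq_mul, mul_one] at h
  rw [h, one_div]

lemma expMeasure_eq (r : ℝ) :
    expMeasure r = volume.withDensity (fun x => ((exponentialPDFReal r x).toNNReal : ℝ≥0∞)) := rfl

lemma integral_expMeasure {r : ℝ} (hr : 0 ≤ r) (f : ℝ → ℝ) :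
    ∫ x, f x ∂(expMeasure r) = ∫ x in Ioi 0, (r * exp (-(r * x))) * f x := by
  rw [expMeasure_eq, integral_withDensity_eq_integral_smul
    (measurable_exponentialPDFReal r).real_toNNReal f]
  have h1 : (fun x => (exponentialPDFReal r x).toNNReal • f x)
      = fun x => (Ici (0:ℝ)).indicator (fun x => (r * exp (-(r * x))) * f x) x := by
    funext x
    simp only [NNReal.smul_def, Real.coe_toNNReal', exponentialPDFReal, gammaPDFReal,
      indicator_apply, mem_Ici, rpow_one, Real.Gamma_one, div_one, sub_self, rpow_zero, mul_one]
    split_ifs with h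
    · rw [max_eq_left]
      · norm_num
      · exact mul_nonneg hr (exp_pos _).le
    · simp
  rw [h1, integral_indicator measurableSet_Ici, integral_Ici_eq_integral_Ioi]


lemma exp_moment {r a : ℝ} (hr : 0 < r) (ha : 0 ≤ a) :
    ∫ x, exp (-(a * x)) ∂(expMeasure r) = r / (r + a) := by
  rw [integral_expMeasure hr.le]
  have h : ∀ x : ℝ, (r * exp (-(r * x))) * exp (-(a * x)) = r * exp (-((r + a) * x)) := by
    intro x; rw [mul_assoc, ← Real.exp_add]; ring_nf
  simp_rw [h]
  rw [integral_const_mul, exp_integral_Ioi (by linarith), mul_one_div]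

lemma expMeasure_Iic_zero {r : ℝ} (hr : 0 < r) : expMeasure r (Iic 0) = 0 := by
  have h0 : expMeasure r = volume.withDensity (exponentialPDF r) := rfl
  rw [h0, withDensity_apply _ measurableSet_Iic, lintegral_exponentialPDF_eq_antiDeriv hr]
  norm_num

lemma expMeasure_Ici {r t : ℝ} (hr : 0 < r) (ht : 0 ≤ t) :
    expMeasure r (Ici t) = ENNReal.ofReal (exp (-(r * t))) := by
  haveI := isProbabilityMeasure_expMeasure hr
  have h0 : expMeasure r = volume.withDensity (exponentialPDF r) := rfl
  have hiic : expMeasure r (Iic t) = ENNReal.ofReal (1 - exp (-(r * t))) := by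
    rw [h0, withDensity_apply _ measurableSet_Iic, lintegral_exponentialPDF_eq_antiDeriv hr,
      if_pos ht]
  have hac : expMeasure r ≪ volume := by
    rw [h0]; exact withDensity_absolutelyContinuous _ _
  have hio : expMeasure r (Iio t) = ENNReal.ofReal (1 - exp (-(r * t))) := by
    rw [← hiic]
    exact measure_congr ((Iio_ae_eq_Iic (a := t)).filter_mono hac.ae_le)
  have he1 : exp (-(r * t)) ≤ 1 := by
    rw [Real.exp_le_one_iff]; nlinarith
  rw [← compl_Iio, measure_compl measurableSet_Iio (measure_ne_top _ _), measure_univ, hio,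
    ← ENNReal.ofReal_one, ← ENNReal.ofReal_sub _ (by linarith)]
  norm_num

lemma ae_Ioi {r : ℝ} (hr : 0 < r) : ∀ᵐ x ∂(expMeasure r), 0 < x := by
  rw [ae_iff]
  have h : {x : ℝ | ¬ 0 < x} = Iic 0 := by ext x; simp
  rw [h]; exact expMeasure_Iic_zero hr

lemma P_lemma {r η₁ η₂ s : ℝ} (hr : 0 < r) (h1 : 0 < η₁) (h2 : 0 < η₂) (hs : 0 < s) :
    ∫ p, ({p : ℝ × ℝ | η₂ * p.1 ≤ s * (η₁ * p.2)}).indicator (fun _ => (1:ℝ)) p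
      ∂((expMeasure r).prod (expMeasure r)) = s * η₁ / (s * η₁ + η₂) := by
  haveI := isProbabilityMeasure_expMeasure hr
  have hA : MeasurableSet {p : ℝ × ℝ | η₂ * p.1 ≤ s * (η₁ * p.2)} :=
    measurableSet_le (measurable_fst.const_mul η₂) ((measurable_snd.const_mul η₁).const_mul s)
  have hint : Integrable (({p : ℝ × ℝ | η₂ * p.1 ≤ s * (η₁ * p.2)}).indicator (fun _ => (1:ℝ)))
      ((expMeasure r).prod (expMeasure r)) := (integrable_const 1).indicator hA
  rw [MeasureTheory.integral_prod _ hint]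
  have hae : ∀ᵐ x ∂(expMeasure r),
      (∫ y, ({p : ℝ × ℝ | η₂ * p.1 ≤ s * (η₁ * p.2)}).indicator (fun _ => (1:ℝ)) (x, y)
        ∂(expMeasure r)) = exp (-((r * η₂ / (s * η₁)) * x)) := by
    filter_upwards [ae_Ioi hr] with x hx
    have hfun : (fun y => ({p : ℝ × ℝ | η₂ * p.1 ≤ s * (η₁ * p.2)}).indicator
        (fun _ => (1:ℝ)) (x, y)) = (Ici (η₂ * x / (s * η₁))).indicator (fun _ => (1:ℝ)) := by
      funext y
      simp only [indicator_apply, mem_setOf_eq, mem_Ici]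
      refine if_congr ?_ rfl rfl
      rw [div_le_iff₀ (by positivity)]
      constructor <;> intro h <;> nlinarith
    rw [hfun, integral_indicator_const (1:ℝ) measurableSet_Ici, measureReal_def,
      expMeasure_Ici hr (by positivity), smul_eq_mul, mul_one,
      ENNReal.toReal_ofReal (exp_pos _).le]
    congr 1
    field_simp
  rw [integral_congr_ae hae, exp_moment hr (by positivity)]
  rw [div_eq_div_iff (by positivity) (by positivity)]
  field_simp

lemma slice {η₁ η₂ x y : ℝ} (h1 : 0 < η₁) (h2 : 0 < η₂) (hx : 0 ≤ x) (hy : 0 < y) :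
    ({p : ℝ × ℝ | η₂ * p.1 ≤ η₁ * p.2}).indicator (fun p => 1 - η₂ * p.1 / (η₁ * p.2)) (x, y)
      = ∫ s in Ioc (0:ℝ) 1,
          ({q : (ℝ × ℝ) × ℝ | η₂ * q.1.1 ≤ q.2 * (η₁ * q.1.2)}).indicator
            (fun _ => (1:ℝ)) ((x, y), s) := by
  set ρ := η₂ * x / (η₁ * y) with hρ
  have hρ0 : 0 ≤ ρ := by positivity
  have hy' : 0 < η₁ * y := by positivity
  have hR : (∫ s in Ioc (0:ℝ) 1,
      ({q : (ℝ × ℝ) × ℝ | η₂ * q.1.1 ≤ q.2 * (η₁ * q.1.2)}).indicator (fun _ => (1:ℝ)) ((x, y), s))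
      = ∫ s in Ioc (0:ℝ) 1, (Ici ρ).indicator (fun _ => (1:ℝ)) s := by
    refine setIntegral_congr_fun measurableSet_Ioc (fun s hs => ?_)
    simp only [indicator_apply, mem_setOf_eq, mem_Ici]
    refine if_congr ?_ rfl rfl
    rw [hρ, div_le_iff₀ hy']
  have hvol : volume (Ici ρ ∩ Ioc (0:ℝ) 1) = ENNReal.ofReal (1 - ρ) := by
    refine le_antisymm ?_ ?_
    · refine le_trans (measure_mono (fun s hs => ?_)) (le_of_eq (Real.volume_Icc (a := ρ) (b := 1)))
      exact ⟨hs.1, hs.2.2⟩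
    · refine le_trans (le_of_eq (Real.volume_Ioc (a := ρ) (b := 1)).symm)
        (measure_mono (fun s hs => ?_))
      exact ⟨hs.1.le, lt_of_le_of_lt hρ0 hs.1, hs.2⟩
  rw [hR, integral_indicator_const (1:ℝ) measurableSet_Ici, measureReal_restrict_apply measurableSet_Ici, measureReal_def,
    hvol, smul_eq_mul, mul_one]
  by_cases hc : η₂ * x ≤ η₁ * y
  · have hρ1 : ρ ≤ 1 := (div_le_one hy').mpr hc
    rw [indicator_of_mem (by exact hc), ENNReal.toReal_ofReal (by linarith)]
  · have hρ1 : 1 < ρ := (one_lt_div hy').mpr (not_le.mp hc)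
    rw [indicator_of_notMem (by exact hc)]
    have h0 : ENNReal.ofReal (1 - ρ) = 0 := ENNReal.ofReal_eq_zero.mpr (by linarith)
    rw [h0, ENNReal.toReal_zero]

lemma final_integral {η₁ η₂ : ℝ} (h1 : 0 < η₁) (h2 : 0 < η₂) :
    ∫ s in Ioc (0:ℝ) 1, s * η₁ / (s * η₁ + η₂) = 1 - η₂ / η₁ * Real.log ((η₂ + η₁) / η₂) := by
  rw [← intervalIntegral.integral_of_le zero_le_one]
  have key : ∀ s ∈ uIcc (0:ℝ) 1,
      HasDerivAt (fun s => s - η₂ / η₁ * Real.log (s * η₁ + η₂)) (s * η₁ / (s * η₁ + η₂)) s := by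
    intro s hs
    rw [uIcc_of_le zero_le_one] at hs
    have hs0 : 0 ≤ s := hs.1
    have hpos : 0 < s * η₁ + η₂ := by positivity
    have hd1 : HasDerivAt (fun s : ℝ => s * η₁ + η₂) η₁ s := by
      simpa using ((hasDerivAt_id s).mul_const η₁).add_const η₂
    have hd2 := hd1.log hpos.ne'
    have hd3 := (hasDerivAt_id s).sub (hd2.const_mul (η₂ / η₁))
    refine (hd3 : HasDerivAt (fun s => s - η₂ / η₁ * Real.log (s * η₁ + η₂)) _ s).congr_deriv ?_
    field_simp
    ring
  rw [intervalIntegral.integral_eq_sub_of_hasDerivAt key ?_]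
  · have hlog : Real.log ((η₂ + η₁) / η₂) = Real.log (η₂ + η₁) - Real.log η₂ :=
      Real.log_div (by positivity) h2.ne'
    rw [show (1:ℝ) * η₁ + η₂ = η₂ + η₁ by ring, show (0:ℝ) * η₁ + η₂ = η₂ by ring, hlog]
    ring
  · apply ContinuousOn.intervalIntegrable
    apply ContinuousOn.div
    · exact (continuousOn_id.mul continuousOn_const)
    · exact ((continuousOn_id.mul continuousOn_const).add continuousOn_const)
    · intro s hs
      rw [uIcc_of_le zero_le_one] at hs
      have : 0 ≤ s := hs.1
      positivity

end Stmt5Aux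

open Stmt5Aux

theorem stmt_5 {Ω : Type*} [MeasureSpace Ω] [IsProbabilityMeasure (ℙ : Measure Ω)]
    (X Y : Ω → ℝ) (hX : Measurable X) (hY : Measurable Y)
    (N η₁ η₂ : ℝ) (hN : 0 < N) (hη₁ : 0 < η₁) (hη₂ : 0 < η₂)
    (hindep : IndepFun X Y)
    (hlawX : Measure.map X ℙ = expMeasure (1 / N))
    (hlawY : Measure.map Y ℙ = expMeasure (1 / N)) :
    ∫ ω, ({ω | η₂ * X ω ≤ η₁ * Y ω}.indicator
        (fun ω => 1 - η₂ * X ω / (η₁ * Y ω))) ω ∂ℙ =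
      1 - (η₂ / η₁) * Real.log ((η₂ + η₁) / η₂) := by
  have hr : 0 < 1 / N := by positivity
  set μ := expMeasure (1 / N) with hμdef
  haveI : IsProbabilityMeasure μ := isProbabilityMeasure_expMeasure hr
  haveI : IsFiniteMeasure (volume.restrict (Ioc (0:ℝ) 1)) :=
    ⟨by rw [Measure.restrict_apply_univ]; simp [Real.volume_Ioc]⟩
  set g : ℝ × ℝ → ℝ :=
    fun p => ({p : ℝ × ℝ | η₂ * p.1 ≤ η₁ * p.2}).indicator
      (fun p => 1 - η₂ * p.1 / (η₁ * p.2)) p with hgdef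
  set B : Set ((ℝ × ℝ) × ℝ) := {q | η₂ * q.1.1 ≤ q.2 * (η₁ * q.1.2)} with hBdef
  have hBmeas : MeasurableSet B :=
    measurableSet_le (measurable_fst.fst.const_mul η₂)
      (measurable_snd.mul (measurable_fst.snd.const_mul η₁))
  have hgmeas : Measurable g := by
    apply Measurable.indicator
    · exact measurable_const.sub ((measurable_fst.const_mul η₂).div (measurable_snd.const_mul η₁))
    · exact measurableSet_le (measurable_fst.const_mul η₂) (measurable_snd.const_mul η₁)
  have hmap : Measure.map (fun ω => (X ω, Y ω)) ℙ = μ.prod μ := by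
    rw [(indepFun_iff_map_prod_eq_prod_map_map hX.aemeasurable hY.aemeasurable).mp hindep,
      hlawX, hlawY]
  have step1 : ∫ ω, ({ω | η₂ * X ω ≤ η₁ * Y ω}.indicator
      (fun ω => 1 - η₂ * X ω / (η₁ * Y ω))) ω ∂ℙ = ∫ p, g p ∂(μ.prod μ) := by
    rw [← hmap, integral_map (hX.aemeasurable.prodMk hY.aemeasurable)
      hgmeas.aestronglyMeasurable]
    refine integral_congr_ae (Filter.Eventually.of_forall fun ω => ?_)
    simp only [hgdef, indicator_apply, mem_setOf_eq]
  have hIoi : μ (Ioi (0:ℝ)) = 1 := by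
    rw [← compl_Iic, measure_compl measurableSet_Iic (measure_ne_top _ _), measure_univ,
      expMeasure_Iic_zero hr, tsub_zero]
  have haeP : ∀ᵐ p ∂(μ.prod μ), 0 < p.1 ∧ 0 < p.2 := by
    have hset : (μ.prod μ) ((Ioi (0:ℝ)) ×ˢ (Ioi (0:ℝ))) = 1 := by
      rw [Measure.prod_prod, hIoi, one_mul]
    have hceq : {p : ℝ × ℝ | ¬(0 < p.1 ∧ 0 < p.2)} = ((Ioi (0:ℝ)) ×ˢ (Ioi (0:ℝ)))ᶜ := by
      ext p; simp [Set.mem_prod]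
    rw [ae_iff, hceq, measure_compl (measurableSet_Ioi.prod measurableSet_Ioi)
      (measure_ne_top _ _), measure_univ, hset, tsub_self]
  have step2 : ∫ p, g p ∂(μ.prod μ)
      = ∫ p, (∫ s in Ioc (0:ℝ) 1, B.indicator (fun _ => (1:ℝ)) (p, s)) ∂(μ.prod μ) := by
    refine integral_congr_ae ?_
    filter_upwards [haeP] with p hp
    simpa [hgdef, hBdef] using slice hη₁ hη₂ hp.1.le hp.2 (x := p.1) (y := p.2)
  have hIntB : Integrable (Function.uncurry fun (p : ℝ × ℝ) (s : ℝ) =>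
      B.indicator (fun _ => (1:ℝ)) (p, s))
      ((μ.prod μ).prod (volume.restrict (Ioc (0:ℝ) 1))) := by
    have : (Function.uncurry fun (p : ℝ × ℝ) (s : ℝ) => B.indicator (fun _ => (1:ℝ)) (p, s))
        = B.indicator (fun _ => (1:ℝ)) := by
      funext q; rfl
    rw [this]
    exact (integrable_const 1).indicator hBmeas
  have step3 : ∫ p, (∫ s in Ioc (0:ℝ) 1, B.indicator (fun _ => (1:ℝ)) (p, s)) ∂(μ.prod μ)
      = ∫ s in Ioc (0:ℝ) 1, (∫ p, B.indicator (fun _ => (1:ℝ)) (p, s) ∂(μ.prod μ)) :=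
    integral_integral_swap hIntB
  have step4 : ∫ s in Ioc (0:ℝ) 1, (∫ p, B.indicator (fun _ => (1:ℝ)) (p, s) ∂(μ.prod μ))
      = ∫ s in Ioc (0:ℝ) 1, s * η₁ / (s * η₁ + η₂) := by
    refine setIntegral_congr_fun measurableSet_Ioc (fun s hs => ?_)
    refine Eq.trans ?_ (P_lemma hr hη₁ hη₂ hs.1)
    refine integral_congr_ae (Filter.Eventually.of_forall fun p => ?_)
    rfl
  rw [step1, step2, step3, step4, final_integral hη₁ hη₂]
end

section
/- For all a, b > 0, the double integral ∫₀^∞ ∫₀^{a y / b} (1/N²) e^{−(x+y)/N} (1 − (b x)/(a y)) dx dy equals 1 − (b/a)·log((a + b)/b), for any N > 0. -/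
open MeasureTheory Set

lemma exp_int_Ioi' {p : ℝ} (hp : 0 < p) :
    ∫ y in Ioi (0:ℝ), Real.exp (-(p*y)) = 1/p := by
  have h := integral_comp_mul_left_Ioi (fun u => Real.exp (-u)) 0 hp
  simp only [mul_zero, integral_exp_neg_Ioi, neg_zero, Real.exp_zero, smul_eq_mul, mul_one] at h
  rw [h, one_div]

lemma frullani_aux {p q : ℝ} (hp : 0 < p) (hpq : p < q) :
    Integrable (Function.uncurry (fun (y t : ℝ) => Real.exp (-(t*y))))
      ((volume.restrict (Ioi (0:ℝ))).prod (volume.restrict (Ioc p q))) := by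
  have hmeas : AEStronglyMeasurable (Function.uncurry (fun (y t : ℝ) => Real.exp (-(t*y))))
      ((volume.restrict (Ioi (0:ℝ))).prod (volume.restrict (Ioc p q))) := by
    apply Continuous.aestronglyMeasurable
    exact Real.continuous_exp.comp (continuous_snd.mul continuous_fst).neg
  have h1 : Integrable (fun y : ℝ => Real.exp (-(p*y))) (volume.restrict (Ioi (0:ℝ))) := by
    exact (by simpa [neg_mul] using exp_neg_integrableOn_Ioi 0 hp : IntegrableOn (fun y : ℝ => Real.exp (-(p*y))) (Ioi 0))
  have h2 : Integrable (fun _ : ℝ => (1:ℝ)) (volume.restrict (Ioc p q)) :=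
    integrable_const 1
  have hdom := Integrable.mul_prod (L := ℝ) h1 h2
  refine hdom.mono hmeas ?_
  rw [Measure.prod_restrict]
  filter_upwards [ae_restrict_mem (measurableSet_Ioi.prod measurableSet_Ioc)] with z hz
  obtain ⟨hy, ht⟩ := hz
  simp only [Function.uncurry, norm_mul, Real.norm_eq_abs, Real.abs_exp, mul_one, abs_one]
  rw [Real.exp_le_exp]
  have hy' : (0:ℝ) < z.1 := hy
  nlinarith [ht.1.le]

lemma frullani_int {p q : ℝ} (hp : 0 < p) (hpq : p < q) :
    IntegrableOn (fun y => (Real.exp (-(p*y)) - Real.exp (-(q*y)))/y) (Ioi (0:ℝ)) ∧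
    ∫ y in Ioi (0:ℝ), (Real.exp (-(p*y)) - Real.exp (-(q*y)))/y = Real.log (q/p) := by
  have hq : 0 < q := hp.trans hpq
  have hint := frullani_aux hp hpq
  have hinner : ∀ y ∈ Ioi (0:ℝ), (∫ t in Ioc p q, Real.exp (-(t*y))) =
      (Real.exp (-(p*y)) - Real.exp (-(q*y)))/y := by
    intro y hy
    have hy' : (0:ℝ) < y := hy
    rw [← intervalIntegral.integral_of_le hpq.le]
    have hder : ∀ t ∈ uIcc p q, HasDerivAt (fun t => -(Real.exp (-(t*y))/y))
        (Real.exp (-(t*y))) t := by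
      intro t _
      have h1 : HasDerivAt (fun t : ℝ => -(t*y)) (-y) t := by
        have := ((hasDerivAt_id t).mul_const y).neg
        rw [one_mul] at this
        exact this
      have h2 := (Real.hasDerivAt_exp (-(t*y))).comp t h1
      have h3 := (h2.div_const y).neg
      refine h3.congr_deriv ?_
      field_simp
    rw [intervalIntegral.integral_eq_sub_of_hasDerivAt hder
      ((Real.continuous_exp.comp ((continuous_id.mul continuous_const)).neg).intervalIntegrable p q)]
    ring
  constructor
  · refine (hint.integral_prod_left).congr ?_
    filter_upwards [ae_restrict_mem measurableSet_Ioi] with y hy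
    exact hinner y hy
  · have hswap := integral_integral_swap hint
    rw [setIntegral_congr_fun measurableSet_Ioi (fun y hy => (hinner y hy))] at hswap
    rw [hswap]
    rw [setIntegral_congr_fun measurableSet_Ioc
      (fun t ht => exp_int_Ioi' (hp.trans ht.1) : ∀ t ∈ Ioc p q,
        (∫ y in Ioi (0:ℝ), Real.exp (-(t*y))) = 1/t)]
    rw [← intervalIntegral.integral_of_le hpq.le, integral_one_div_of_pos hp hq]

lemma inner_eval {a b N : ℝ} (ha : 0 < a) (hb : 0 < b) (hN : 0 < N) {y : ℝ} (hy : 0 < y) :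
    ∫ x in Ioc (0:ℝ) (a * y / b), (1 / N ^ 2) * Real.exp (-(x + y) / N) * (1 - b * x / (a * y)) =
      (1/N) * Real.exp (-((1/N)*y)) -
        (b/a) * ((Real.exp (-((1/N)*y)) - Real.exp (-(((a+b)/(b*N))*y)))/y) := by
  set c : ℝ := a * y / b with hc
  have hc0 : 0 < c := by positivity
  rw [← intervalIntegral.integral_of_le hc0.le]
  have hder : ∀ x ∈ uIcc (0:ℝ) c,
      HasDerivAt (fun x => (1 / N ^ 2) * (Real.exp (-(x + y) / N) * (N^2/c - N + (N/c)*x)))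
        ((1 / N ^ 2) * Real.exp (-(x + y) / N) * (1 - b * x / (a * y))) x := by
    intro x _
    have h1 : HasDerivAt (fun x : ℝ => -(x + y) / N) (-1/N) x := by
      have h := (((hasDerivAt_id x).add_const y).neg.div_const N)
      simpa using h
    have h2 : HasDerivAt (fun x : ℝ => Real.exp (-(x + y) / N))
        (Real.exp (-(x + y) / N) * (-1/N)) x := h1.exp
    have h3 : HasDerivAt (fun x : ℝ => N^2/c - N + (N/c)*x) (N/c) x := by
      simpa using ((hasDerivAt_id x).const_mul (N/c)).const_add (N^2/c - N)
    have h4 := (h2.mul h3).const_mul (1 / N ^ 2)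
    refine h4.congr_deriv ?_
    have hbx : b * x / (a * y) = x / c := by
      rw [hc]; field_simp
    rw [hbx]
    field_simp
    ring
  rw [intervalIntegral.integral_eq_sub_of_hasDerivAt hder ?cont]
  case cont =>
    apply Continuous.intervalIntegrable
    have : Continuous fun x : ℝ => Real.exp (-(x + y) / N) :=
      Real.continuous_exp.comp (((continuous_id.add continuous_const).neg).div_const N)
    continuity
  have e1 : -(c + y) / N = -(((a+b)/(b*N))*y) := by
    rw [hc]; field_simp
  have e2 : -((0:ℝ) + y) / N = -((1/N)*y) := by field_simp; ring
  rw [e1, e2]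
  set E1 := Real.exp (-((1/N)*y)) with hE1
  set E2 := Real.exp (-(((a+b)/(b*N))*y)) with hE2
  rw [hc]
  field_simp
  ring

theorem stmt_6 (a b N : ℝ) (ha : 0 < a) (hb : 0 < b) (hN : 0 < N) :
    ∫ y in Ioi (0 : ℝ), ∫ x in Ioc (0 : ℝ) (a * y / b),
        (1 / N ^ 2) * Real.exp (-(x + y) / N) * (1 - b * x / (a * y)) =
      1 - (b / a) * Real.log ((a + b) / b) := by
  have hp : (0:ℝ) < 1/N := by positivity
  have hpq : (1/N : ℝ) < (a+b)/(b*N) := by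
    rw [div_lt_div_iff₀ hN (by positivity)]
    nlinarith
  obtain ⟨hint, hval⟩ := frullani_int hp hpq
  rw [setIntegral_congr_fun measurableSet_Ioi (fun y hy => inner_eval ha hb hN hy)]
  have i1 : Integrable (fun y : ℝ => (1/N) * Real.exp (-((1/N)*y))) (volume.restrict (Ioi 0)) := by
    apply Integrable.const_mul
    exact (by simpa [neg_mul] using exp_neg_integrableOn_Ioi 0 hp : IntegrableOn (fun y : ℝ => Real.exp (-((1/N)*y))) (Ioi 0))
  have i2 : Integrable (fun y : ℝ =>
      (b/a) * ((Real.exp (-((1/N)*y)) - Real.exp (-(((a+b)/(b*N))*y)))/y))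
      (volume.restrict (Ioi 0)) := hint.const_mul (b/a)
  rw [integral_sub i1 i2, integral_const_mul, integral_const_mul, exp_int_Ioi' hp, hval]
  have hq : ((a+b)/(b*N))/(1/N) = (a+b)/b := by
    field_simp
  rw [hq]
  field_simp
end

section
/- Let τ₂ = ζ₁P̂ + ζ₂ and τ₃ = ζ₃ with ζ₁, P̂ > 0 and 0 ≤ ζ₂ < ζ₃. The minimum detection error probability min_{τ>0} ξ(τ) equals 0 if and only if ζ₁P̂ ≤ ζ₃ − ζ₂. -/
open MeasureTheory Set

lemma unif_apply (P : ℝ) (S : Set ℝ) (hS : MeasurableSet S) :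
    (unifMeasure P) S = (ENNReal.ofReal P)⁻¹ * volume (S ∩ Icc 0 P) := by
  simp [unifMeasure, Measure.smul_apply, Measure.restrict_apply hS, smul_eq_mul]

lemma unif_toReal_eq_zero (P : ℝ) (hP : 0 < P) (S : Set ℝ) (hS : MeasurableSet S) :
    ((unifMeasure P) S).toReal = 0 ↔ volume (S ∩ Icc 0 P) = 0 := by
  rw [unif_apply P S hS]
  have hc0 : (ENNReal.ofReal P)⁻¹ ≠ 0 := by
    simp [ENNReal.inv_ne_zero]
  have hct : (ENNReal.ofReal P)⁻¹ ≠ ⊤ := by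
    simp only [ne_eq, ENNReal.inv_eq_top]
    exact (ENNReal.ofReal_pos.mpr hP).ne'
  have hv : volume (S ∩ Icc 0 P) ≤ ENNReal.ofReal P := by
    calc volume (S ∩ Icc 0 P) ≤ volume (Icc 0 P) := measure_mono inter_subset_right
    _ = ENNReal.ofReal P := by simp [Real.volume_Icc]
  have hvt : volume (S ∩ Icc 0 P) ≠ ⊤ := ne_top_of_le_ne_top ENNReal.ofReal_ne_top hv
  rw [ENNReal.toReal_eq_zero_iff]
  constructor
  · rintro (h | h)
    · rcases mul_eq_zero.mp h with h | h
      · exact absurd h hc0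
      · exact h
    · exact absurd h (ENNReal.mul_ne_top hct hvt)
  · intro h
    left; rw [h, mul_zero]

lemma set1_eq (ζ₁ ζ₂ τ : ℝ) (hζ₁ : 0 < ζ₁) :
    {x : ℝ | ζ₁ * x + ζ₂ > τ} = Ioi ((τ - ζ₂) / ζ₁) := by
  ext x
  simp only [mem_setOf_eq, mem_Ioi, gt_iff_lt]
  rw [div_lt_iff₀ hζ₁]
  constructor <;> intro h <;> linarith

lemma set2_eq (ζ₁ ζ₃ τ : ℝ) (hζ₁ : 0 < ζ₁) :
    {x : ℝ | ζ₁ * x + ζ₃ ≤ τ} = Iic ((τ - ζ₃) / ζ₁) := by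
  ext x
  simp only [mem_setOf_eq, mem_Iic]
  rw [le_div_iff₀ hζ₁]
  constructor <;> intro h <;> linarith

theorem stmt_14 (Phat ζ₁ ζ₂ ζ₃ : ℝ) (hP : 0 < Phat) (hζ₁ : 0 < ζ₁) (hζ₂ : 0 ≤ ζ₂)
    (hζ₂₃ : ζ₂ < ζ₃) :
    IsLeast (DEP Phat ζ₁ ζ₂ ζ₃ '' Ioi 0) 0 ↔ ζ₁ * Phat ≤ ζ₃ - ζ₂ := by
  constructor
  · rintro ⟨⟨τ, hτ, hDEP⟩, -⟩
    unfold DEP at hDEP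
    rw [set1_eq ζ₁ ζ₂ τ hζ₁, set2_eq ζ₁ ζ₃ τ hζ₁] at hDEP
    have hA : 0 ≤ ((unifMeasure Phat) (Ioi ((τ - ζ₂) / ζ₁))).toReal := ENNReal.toReal_nonneg
    have hB : 0 ≤ ((unifMeasure Phat) (Iic ((τ - ζ₃) / ζ₁))).toReal := ENNReal.toReal_nonneg
    have hA0 : ((unifMeasure Phat) (Ioi ((τ - ζ₂) / ζ₁))).toReal = 0 := by linarith
    have hB0 : ((unifMeasure Phat) (Iic ((τ - ζ₃) / ζ₁))).toReal = 0 := by linarith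
    rw [unif_toReal_eq_zero Phat hP _ measurableSet_Ioi] at hA0
    rw [unif_toReal_eq_zero Phat hP _ measurableSet_Iic] at hB0
    -- from hA0: (τ - ζ₂)/ζ₁ ≥ Phat
    have h1 : Phat ≤ (τ - ζ₂) / ζ₁ := by
      by_contra hcon
      push_neg at hcon
      set a := (τ - ζ₂) / ζ₁ with ha
      have hsub : Ioo (max a 0) Phat ⊆ Ioi a ∩ Icc 0 Phat := by
        rintro x ⟨hx1, hx2⟩
        exact ⟨lt_of_le_of_lt (le_max_left a 0) hx1,
          le_of_lt (lt_of_le_of_lt (le_max_right a 0) hx1), le_of_lt hx2⟩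
      have hpos : (0 : ENNReal) < volume (Ioo (max a 0) Phat) := by
        rw [Real.volume_Ioo]
        exact ENNReal.ofReal_pos.mpr (by rw [sub_pos]; exact max_lt hcon hP)
      exact absurd (le_trans (measure_mono hsub) (le_of_eq hA0)) (not_le.mpr hpos)
    -- from hB0: (τ - ζ₃)/ζ₁ ≤ 0
    have h2 : (τ - ζ₃) / ζ₁ ≤ 0 := by
      by_contra hcon
      push_neg at hcon
      set b := (τ - ζ₃) / ζ₁ with hb
      have hsub : Ioo 0 (min b Phat) ⊆ Iic b ∩ Icc 0 Phat := by
        rintro x ⟨hx1, hx2⟩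
        exact ⟨le_of_lt (lt_of_lt_of_le hx2 (min_le_left b Phat)), le_of_lt hx1,
          le_of_lt (lt_of_lt_of_le hx2 (min_le_right b Phat))⟩
      have hpos : (0 : ENNReal) < volume (Ioo 0 (min b Phat)) := by
        rw [Real.volume_Ioo]
        exact ENNReal.ofReal_pos.mpr (by simp [lt_min_iff]; exact ⟨hcon, hP⟩)
      exact absurd (le_trans (measure_mono hsub) (le_of_eq hB0)) (not_le.mpr hpos)
    have h1' : ζ₁ * Phat ≤ τ - ζ₂ := by
      rw [le_div_iff₀ hζ₁] at h1; linarith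
    have h2' : τ ≤ ζ₃ := by
      rw [div_nonpos_iff] at h2
      rcases h2 with ⟨h, _⟩ | ⟨_, h⟩
      · linarith
      · linarith
    linarith
  · intro h
    have hζ₃ : 0 < ζ₃ := lt_of_le_of_lt hζ₂ hζ₂₃
    constructor
    · refine ⟨ζ₃, hζ₃, ?_⟩
      unfold DEP
      rw [set1_eq ζ₁ ζ₂ ζ₃ hζ₁, set2_eq ζ₁ ζ₃ ζ₃ hζ₁]
      have hA : ((unifMeasure Phat) (Ioi ((ζ₃ - ζ₂) / ζ₁))).toReal = 0 := by
        rw [unif_toReal_eq_zero Phat hP _ measurableSet_Ioi]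
        have hPa : Phat ≤ (ζ₃ - ζ₂) / ζ₁ := by
          rw [le_div_iff₀ hζ₁]; linarith
        have : Ioi ((ζ₃ - ζ₂) / ζ₁) ∩ Icc 0 Phat = ∅ := by
          ext x
          simp only [mem_inter_iff, mem_Ioi, mem_Icc, mem_empty_iff_false, iff_false]
          rintro ⟨h1, _, h3⟩
          linarith
        rw [this]; simp
      have hB : ((unifMeasure Phat) (Iic ((ζ₃ - ζ₃) / ζ₁))).toReal = 0 := by
        rw [unif_toReal_eq_zero Phat hP _ measurableSet_Iic]
        have hz : (ζ₃ - ζ₃) / ζ₁ = 0 := by simp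
        rw [hz]
        have : Iic (0:ℝ) ∩ Icc 0 Phat ⊆ {0} := by
          rintro x ⟨h1, h2, _⟩
          simp [le_antisymm h1 h2]
        exact measure_mono_null this (measure_singleton 0)
      rw [hA, hB, add_zero]
    · rintro y ⟨τ, -, rfl⟩
      unfold DEP
      positivity
end
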